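/- arXiv:2501.11393 — 4 statements merged into one kernel-verified Lean document; each statement's English description precedes it below -/
import Mathlib

section
/- Let n ≥ 1, let x ∈ {0,1}^n, and let q ∈ (0,1). The expected number of runs of 1s in a trace of x obtained by passing x through an i.i.d. deletion channel with deletion probability q is E[R_{x,1}] = (1−q)·( w_H(x) − ((1−q)/q)·Σ_{i,j ∈ S_x, i<j} q^{j−i} ). -/
open Finset

/-- Number of deletions in a deletion pattern (number of `1`s in `ω`). -/
def wt {n : ℕ} (ω : Fin n → Bool) : ℕ := (univ.filter fun j => ω j = true).card

/-- Trace of `x` under deletion pattern `ω`: the subsequence of bits `x j`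
at the positions `j` with `ω j = 0`, in increasing order of position. -/
def trc {n : ℕ} (x ω : Fin n → Bool) : List Bool :=
  ((List.finRange n).filter fun j => ω j = false).map x

/-- Total number of runs (maximal blocks of equal bits) in a binary list. -/
def numRuns (l : List Bool) : ℕ := (l.destutter (· ≠ ·)).length

/-- Number of runs of `0`s in a binary list. -/
def numZeroRuns (l : List Bool) : ℕ := (l.destutter (· ≠ ·)).count false

/-- Number of runs of `1`s in a binary list. -/
def numOneRuns (l : List Bool) : ℕ := (l.destutter (· ≠ ·)).count true

/-!
A binary word has as many runs of ones as it has ones minus adjacent `(1, 1)` pairs. Two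
symbols are adjacent in the trace exactly when they come from surviving positions `i < j`
of `x` with every position strictly between them deleted, an event of probability
`(1 - q) ^ 2 * q ^ (j - i - 1)`, while a one of `x` survives with probability `1 - q`.
Linearity of expectation then gives the formula.
-/

theorem List.count_true_destutter'_add_countP_consecutivePairs (l : List Bool) (a : Bool) :
    (l.destutter' (· ≠ ·) a).count true +
      (a :: l).consecutivePairs.countP (fun p => p.1 && p.2) = (a :: l).count true := by
  induction l generalizing a with
  | nil => cases a <;> rfl
  | cons b l ih =>
    have hcp : (a :: b :: l).consecutivePairs = (a, b) :: (b :: l).consecutivePairs := rfl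
    have iha := ih a
    have ihb := ih b
    rw [hcp, List.countP_cons]
    cases a <;> cases b <;> simp_all [List.count_cons] <;> omega

theorem List.count_true_destutter_add_countP_consecutivePairs (l : List Bool) :
    (l.destutter (· ≠ ·)).count true + l.consecutivePairs.countP (fun p => p.1 && p.2) =
      l.count true := by
  cases l with
  | nil => rfl
  | cons a l => exact count_true_destutter'_add_countP_consecutivePairs l a

theorem List.Pairwise.mem_consecutivePairs_iff {α : Type*} [LinearOrder α] {l : List α}
    (hl : l.Pairwise (· < ·)) {a b : α} :
    (a, b) ∈ l.consecutivePairs ↔ a ∈ l ∧ b ∈ l ∧ a < b ∧ ∀ c ∈ l, ¬(a < c ∧ c < b) := by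
  induction l with
  | nil => simp
  | cons a₀ l ih =>
    rw [List.pairwise_cons] at hl
    cases l with
    | nil =>
      simp only [List.consecutivePairs, List.tail, List.zip_nil_right, List.not_mem_nil,
        false_iff, List.mem_singleton]
      rintro ⟨rfl, rfl, h, -⟩
      exact lt_irrefl _ h
    | cons b₀ l =>
      have hcp : (a₀ :: b₀ :: l).consecutivePairs = (a₀, b₀) :: (b₀ :: l).consecutivePairs := rfl
      have hb₀ := List.pairwise_cons.mp hl.2
      rw [hcp, List.mem_cons, ih hl.2, Prod.mk.injEq]
      simp only [List.mem_cons, forall_eq_or_imp] at hl hb₀ ⊢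
      grind

theorem List.Pairwise.nodup_consecutivePairs {α : Type*} [LinearOrder α] {l : List α}
    (hl : l.Pairwise (· < ·)) : l.consecutivePairs.Nodup := by
  induction l with
  | nil => exact List.nodup_nil
  | cons a₀ l ih =>
    cases l with
    | nil => exact List.nodup_nil
    | cons b₀ l =>
      have hcp : (a₀ :: b₀ :: l).consecutivePairs = (a₀, b₀) :: (b₀ :: l).consecutivePairs := rfl
      rw [hcp, List.nodup_cons, hl.of_cons.mem_consecutivePairs_iff]
      refine ⟨fun h => ?_, ih hl.of_cons⟩
      exact lt_irrefl _ ((List.pairwise_cons.mp hl).1 a₀ h.1)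

theorem List.Nodup.countP_eq_card {α : Type*} [Fintype α] [DecidableEq α] {l : List α}
    (hl : l.Nodup) (p : α → Bool) : l.countP p = #{a | a ∈ l ∧ p a} := by
  rw [List.countP_eq_length_filter, ← List.toFinset_card_of_nodup (hl.filter p)]
  congr 1
  ext a
  simp

def bitProb (q : ℝ) (b : Bool) : ℝ := if b then q else 1 - q

def patternProb {ι : Type*} [Fintype ι] (q : ℝ) (ω : ι → Bool) : ℝ := ∏ j, bitProb q (ω j)

theorem pow_wt_mul_pow_sub_wt_eq_patternProb {n : ℕ} (q : ℝ) (ω : Fin n → Bool) :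
    q ^ wt ω * (1 - q) ^ (n - wt ω) = patternProb q ω := by
  have hcard : #{j | ¬ω j = true} = n - wt ω := by
    have := card_filter_add_card_filter_not (s := univ) (p := fun j : Fin n => ω j = true)
    rw [card_univ, Fintype.card_fin] at this
    rw [wt]
    omega
  simp only [patternProb, bitProb, prod_ite, prod_const, wt, hcard]

theorem sum_patternProb_mul_ite_eqOn {ι : Type*} [Fintype ι] [DecidableEq ι] (q : ℝ)
    (A : Finset ι) (f : ι → Bool) :
    ∑ ω : ι → Bool, patternProb q ω * (if ∀ j ∈ A, ω j = f j then 1 else 0) =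
      ∏ j ∈ A, bitProb q (f j) := by
  let t : ι → Finset Bool := fun j => if j ∈ A then {f j} else univ
  have hfilter : ({ω | ∀ j ∈ A, ω j = f j} : Finset (ι → Bool)) = Fintype.piFinset t := by
    ext ω
    simp only [mem_filter, mem_univ, true_and, Fintype.mem_piFinset, t]
    refine forall_congr' fun j => ?_
    split_ifs <;> simp_all
  have hfactor (j : ι) : ∑ b ∈ t j, bitProb q b = if j ∈ A then bitProb q (f j) else 1 := by
    split_ifs with hj <;> simp [t, hj, bitProb]
  simp only [mul_boole]
  rw [← sum_filter, hfilter]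
  simp only [patternProb]
  rw [← prod_univ_sum]
  simp only [hfactor, prod_ite_mem, univ_inter]

theorem sum_patternProb_mul_survives {ι : Type*} [Fintype ι] [DecidableEq ι] (q : ℝ) (i : ι) :
    ∑ ω : ι → Bool, patternProb q ω * (if ω i = false then 1 else 0) = 1 - q := by
  simpa [bitProb] using sum_patternProb_mul_ite_eqOn q {i} fun _ => false

section ConsecutiveSurvivors

variable {ι : Type*} [LinearOrder ι] [LocallyFiniteOrder ι]

def ConsecutiveSurvivors (ω : ι → Bool) (i j : ι) : Prop :=
  ω i = false ∧ ω j = false ∧ ∀ k ∈ Ioo i j, ω k = true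

instance (ω : ι → Bool) (i j : ι) : Decidable (ConsecutiveSurvivors ω i j) := by
  unfold ConsecutiveSurvivors; infer_instance

theorem consecutiveSurvivors_iff_eqOn_Icc {ω : ι → Bool} {i j : ι} (hij : i < j) :
    ConsecutiveSurvivors ω i j ↔ ∀ k ∈ Icc i j, ω k = decide (i < k ∧ k < j) := by
  simp only [ConsecutiveSurvivors, mem_Icc, mem_Ioo]
  constructor
  · rintro ⟨hi, hj, hmid⟩ k ⟨hik, hkj⟩
    rcases hik.lt_or_eq with hik | rfl
    · rcases hkj.lt_or_eq with hkj | rfl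
      · simpa [hik, hkj] using hmid k ⟨hik, hkj⟩
      · simpa using hj
    · simpa using hi
  · intro h
    refine ⟨by simpa using h i ⟨le_rfl, hij.le⟩, by simpa using h j ⟨hij.le, le_rfl⟩,
      fun k hk => by simpa [hk] using h k ⟨hk.1.le, hk.2.le⟩⟩

theorem sum_patternProb_mul_consecutiveSurvivors [Fintype ι] (q : ℝ) {i j : ι} (hij : i < j) :
    ∑ ω : ι → Bool, patternProb q ω * (if ConsecutiveSurvivors ω i j then 1 else 0) =
      (1 - q) ^ 2 * q ^ #(Ioo i j) := by
  simp only [consecutiveSurvivors_iff_eqOn_Icc hij, sum_patternProb_mul_ite_eqOn]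
  rw [← Ioc_insert_left hij.le, ← Ioo_insert_right hij, prod_insert (by simp [hij.ne]),
    prod_insert (by simp), prod_congr rfl fun k hk => by rw [decide_eq_true (mem_Ioo.mp hk)]]
  simp only [bitProb, lt_self_iff_false, false_and, decide_false, Bool.false_eq_true,
    ↓reduceIte, and_false, prod_const]
  ring

end ConsecutiveSurvivors

theorem mem_consecutivePairs_filter_finRange {n : ℕ} (ω : Fin n → Bool) {i j : Fin n} :
    (i, j) ∈ ((List.finRange n).filter fun k => ω k = false).consecutivePairs ↔
      i < j ∧ ConsecutiveSurvivors ω i j := by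
  rw [((List.pairwise_lt_finRange n).filter _).mem_consecutivePairs_iff]
  simp only [List.mem_filter, List.mem_finRange, true_and, decide_eq_true_eq,
    ConsecutiveSurvivors, mem_Ioo]
  grind

theorem numOneRuns_trc_add_card {n : ℕ} (x ω : Fin n → Bool) :
    numOneRuns (trc x ω) +
        #{p : Fin n × Fin n | x p.1 ∧ x p.2 ∧ p.1 < p.2 ∧ ConsecutiveSurvivors ω p.1 p.2} =
      #{i | x i ∧ ω i = false} := by
  set L := (List.finRange n).filter fun k => ω k = false
  have hL : L.Pairwise (· < ·) := (List.pairwise_lt_finRange n).filter _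
  have hpairs : (trc x ω).consecutivePairs.countP (fun p => p.1 && p.2) =
      #{p : Fin n × Fin n | x p.1 ∧ x p.2 ∧ p.1 < p.2 ∧ ConsecutiveSurvivors ω p.1 p.2} := by
    have : (trc x ω).consecutivePairs = L.consecutivePairs.map (Prod.map x x) := by
      simp only [trc, L, List.consecutivePairs, ← List.map_tail, List.zip_map]
    rw [this, List.countP_map, hL.nodup_consecutivePairs.countP_eq_card]
    congr 1
    ext ⟨i, j⟩
    simp only [mem_filter, mem_univ, true_and, mem_consecutivePairs_filter_finRange,
      Function.comp_apply, Prod.map_apply, Bool.and_eq_true, L]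
    tauto
  have hones : (trc x ω).count true = #{i | x i ∧ ω i = false} := by
    rw [trc, List.count, List.countP_map,
      ((List.nodup_finRange n).filter _).countP_eq_card]
    congr 1
    ext i
    simp only [mem_filter, mem_univ, true_and, List.mem_filter, List.mem_finRange,
      Function.comp_apply, beq_true, Bool.decide_eq_false, Bool.not_eq_eq_eq_not, Bool.not_true]
    tauto
  rw [numOneRuns, ← hpairs, ← hones]
  exact List.count_true_destutter_add_countP_consecutivePairs _

theorem numOneRuns_trc_eq_sub {n : ℕ} (x ω : Fin n → Bool) :
    (numOneRuns (trc x ω) : ℝ) =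
      ∑ i ∈ univ.filter (fun i => x i = true), (if ω i = false then 1 else 0) -
        ∑ i ∈ univ.filter (fun i => x i = true),
          ∑ j ∈ univ.filter (fun j => x j = true ∧ i < j),
            if ConsecutiveSurvivors ω i j then 1 else 0 := by
  rw [eq_sub_iff_add_eq, sum_boole, filter_filter]
  have hpairs : ∑ i ∈ univ.filter (fun i => x i = true),
      ∑ j ∈ univ.filter (fun j => x j = true ∧ i < j),
        (if ConsecutiveSurvivors ω i j then (1 : ℝ) else 0) =
      #{p : Fin n × Fin n | x p.1 ∧ x p.2 ∧ p.1 < p.2 ∧ ConsecutiveSurvivors ω p.1 p.2} := by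
    rw [card_filter, Nat.cast_sum, Fintype.sum_prod_type, sum_filter]
    refine sum_congr rfl fun i _ => ?_
    rw [sum_filter]
    split_ifs with hi <;> simp [hi, ite_and]
  rw [hpairs]
  exact_mod_cast numOneRuns_trc_add_card x ω

theorem expected_one_runs_general (n : ℕ) (x : Fin n → Bool)
    (q : ℝ) (hq0 : 0 < q) :
    (∑ ω : Fin n → Bool,
        q ^ wt ω * (1 - q) ^ (n - wt ω) * (numOneRuns (trc x ω) : ℝ)) =
      (1 - q) * (((univ.filter fun i : Fin n => x i = true).card : ℝ)
        - (1 - q) / q *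
            ∑ i ∈ univ.filter (fun i : Fin n => x i = true),
              ∑ j ∈ univ.filter (fun j : Fin n => x j = true ∧ i < j),
                q ^ ((j : ℕ) - (i : ℕ))) := by
  have hterm {i j : Fin n} (hij : i < j) :
      (1 - q) ^ 2 * q ^ #(Ioo i j) = (1 - q) * ((1 - q) / q * q ^ ((j : ℕ) - (i : ℕ))) := by
    obtain ⟨m, hm⟩ : ∃ m, (j : ℕ) - i = m + 1 := ⟨(j : ℕ) - i - 1, by omega⟩
    rw [Fin.card_Ioo, hm, Nat.add_sub_cancel]
    field_simp
    ring
  calc ∑ ω : Fin n → Bool, q ^ wt ω * (1 - q) ^ (n - wt ω) * (numOneRuns (trc x ω) : ℝ)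
      = ∑ i ∈ univ.filter (fun i => x i = true),
            ∑ ω : Fin n → Bool, patternProb q ω * (if ω i = false then 1 else 0) -
          ∑ i ∈ univ.filter (fun i => x i = true),
            ∑ j ∈ univ.filter (fun j => x j = true ∧ i < j),
              ∑ ω : Fin n → Bool,
                patternProb q ω * (if ConsecutiveSurvivors ω i j then 1 else 0) := by
        simp only [pow_wt_mul_pow_sub_wt_eq_patternProb, numOneRuns_trc_eq_sub, mul_sub, mul_sum,
          sum_sub_distrib]
        rw [sum_comm, sum_comm (s := univ)]
        simp only [sum_comm (s := univ) (t := univ.filter fun j => _)]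
    _ = ∑ i ∈ univ.filter (fun i => x i = true), (1 - q) -
          ∑ i ∈ univ.filter (fun i => x i = true),
            ∑ j ∈ univ.filter (fun j => x j = true ∧ i < j), (1 - q) ^ 2 * q ^ #(Ioo i j) := by
        simp only [sum_patternProb_mul_survives]
        congr 1
        refine sum_congr rfl fun i _ => sum_congr rfl fun j hj => ?_
        exact sum_patternProb_mul_consecutiveSurvivors q (mem_filter.mp hj).2.2
    _ = _ := by
        rw [sum_const, nsmul_eq_mul,
          sum_congr rfl fun i _ => sum_congr rfl fun j hj => hterm (mem_filter.mp hj).2.2]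
        simp only [← mul_sum]
        ring

/-- Expected number of runs of `1`s in a trace of `x` through the i.i.d. deletion
channel with deletion probability `q`. -/
theorem expected_one_runs (n : ℕ) (hn : 1 ≤ n) (x : Fin n → Bool)
    (q : ℝ) (hq0 : 0 < q) (hq1 : q < 1) :
    (∑ ω : Fin n → Bool,
        q ^ wt ω * (1 - q) ^ (n - wt ω) * (numOneRuns (trc x ω) : ℝ)) =
      (1 - q) * (((univ.filter fun i : Fin n => x i = true).card : ℝ)
        - (1 - q) / q *
            ∑ i ∈ univ.filter (fun i : Fin n => x i = true),
              ∑ j ∈ univ.filter (fun j : Fin n => x j = true ∧ i < j),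
                q ^ ((j : ℕ) - (i : ℕ))) :=
  expected_one_runs_general n x q hq0
end

section
/- Let n ≥ 1, let x ∈ {0,1}^n, and let q ∈ (0,1). The expected total number of runs in a trace of x obtained by passing x through an i.i.d. deletion channel with deletion probability q is E[R_x] = (1−q)·( n − ((1−q)/q)·( Σ_{i,j ∈ S̄_x, i<j} q^{j−i} + Σ_{i,j ∈ S_x, i<j} q^{j−i} ) ). -/
open Finset

/-!
A nonempty trace has one run more than it has pairs of consecutive surviving positions
`i < j` with `x i ≠ x j`. The pair `i < j` is consecutive exactly when `i, j` survive and the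
`j - i - 1` positions between them are deleted, which has probability `(1 - q)² q^(j-i-1)`; so by
linearity `E[R] = 1 - qⁿ + (1 - q)² ∑_{i<j, xᵢ≠xⱼ} q^(j-i-1)`. Over all pairs `i < j` the sum is
geometric, `(1 - q)² ∑_{i<j} q^(j-i-1) = (1 - q) n - (1 - qⁿ)`, and subtracting the pairs with
`xᵢ = xⱼ` gives the stated formula.
-/

namespace List

variable {α : Type*}

theorem length_destutter'_ne [DecidableEq α] (a : α) (l : List α) :
    (l.destutter' (· ≠ ·) a).length = 1 + ((a :: l).zip l).countP (fun p => p.1 ≠ p.2) := by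
  induction l generalizing a with
  | nil => simp
  | cons b l ih =>
    by_cases hab : a = b
    · subst hab
      simp [ih]
    · simp [destutter'_cons_pos (R := (· ≠ ·)) _ hab, ih, hab]
      omega

theorem length_destutter_ne [DecidableEq α] (l : List α) :
    (l.destutter (· ≠ ·)).length =
      (if l = [] then 0 else 1) + (l.zip l.tail).countP (fun p => p.1 ≠ p.2) := by
  cases l with
  | nil => simp
  | cons a l => simp [destutter_cons', length_destutter'_ne]

theorem Pairwise.mem_zip_tail_iff [Preorder α] {l : List α} (hl : l.Pairwise (· < ·))
    {a b : α} :
    (a, b) ∈ l.zip l.tail ↔ a ∈ l ∧ b ∈ l ∧ a < b ∧ ∀ k ∈ l, ¬(a < k ∧ k < b) := by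
  induction l with
  | nil => simp
  | cons c l ih =>
    obtain ⟨hc, hl⟩ := pairwise_cons.mp hl
    cases l with
    | nil =>
      simp only [tail_cons, zip_nil_right, not_mem_nil, false_iff, mem_singleton]
      rintro ⟨rfl, rfl, h, -⟩
      exact lt_irrefl _ h
    | cons d t =>
      have hd : ∀ k ∈ t, d < k := (pairwise_cons.mp hl).1
      have ih := ih hl
      rw [tail_cons] at ih
      rw [tail_cons, zip_cons_cons, mem_cons, ih, Prod.mk.injEq]
      constructor
      · rintro (⟨rfl, rfl⟩ | ⟨ha, hb, hab, hk⟩)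
        · refine ⟨mem_cons_self, mem_cons_of_mem _ mem_cons_self, hc _ mem_cons_self, ?_⟩
          rintro k hk ⟨h1, h2⟩
          rcases mem_cons.mp hk with rfl | hk
          · exact lt_irrefl _ h1
          rcases mem_cons.mp hk with rfl | hk
          exacts [lt_irrefl _ h2, lt_asymm h2 (hd k hk)]
        · refine ⟨mem_cons_of_mem _ ha, mem_cons_of_mem _ hb, hab, fun k hkl => ?_⟩
          rcases mem_cons.mp hkl with rfl | hkl
          exacts [fun h => lt_asymm h.1 (hc _ ha), hk k hkl]
      · rintro ⟨ha, hb, hab, hk⟩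
        rcases mem_cons.mp ha with rfl | ha'
        · rcases mem_cons.mp hb with rfl | hb'
          · exact absurd hab (lt_irrefl _)
          rcases mem_cons.mp hb' with rfl | hbt
          · exact .inl ⟨rfl, rfl⟩
          · exact absurd ⟨hc _ mem_cons_self, hd b hbt⟩ (hk d (mem_cons_of_mem _ mem_cons_self))
        · rcases mem_cons.mp hb with rfl | hb'
          · exact absurd (hab.trans (hc a ha')) (lt_irrefl _)
          · exact .inr ⟨ha', hb', hab, fun k hk' => hk k (mem_cons_of_mem _ hk')⟩

theorem Pairwise.nodup_zip_tail [Preorder α] {l : List α} (hl : l.Pairwise (· < ·)) :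
    (l.zip l.tail).Nodup := by
  induction l with
  | nil => simp
  | cons c l ih =>
    obtain ⟨hc, hl⟩ := pairwise_cons.mp hl
    cases l with
    | nil => simp
    | cons d t =>
      rw [tail_cons, zip_cons_cons, nodup_cons]
      exact ⟨fun h => lt_irrefl c (hc c (of_mem_zip h).1), ih hl⟩

end List

theorem sum_filter_lt_and_eq {ι β M : Type*} [Fintype ι] [LinearOrder ι] [Fintype β]
    [DecidableEq β] [AddCommMonoid M] (x : ι → β) (f : ι → ι → M) :
    ∑ p : ι × ι with p.1 < p.2 ∧ x p.1 = x p.2, f p.1 p.2 =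
      ∑ b, ∑ i with x i = b, ∑ j with x j = b ∧ i < j, f i j := by
  rw [← sum_fiberwise _ fun p => x p.1]
  refine sum_congr rfl fun b _ => ?_
  rw [filter_filter]
  exact sum_finset_product _ _ _ fun p => by simp only [mem_filter, mem_univ, true_and]; grind

section Trace

variable {n : ℕ}

def AdjacentInTrace (ω : Fin n → Bool) (i j : Fin n) : Prop :=
  i < j ∧ ω i = false ∧ ω j = false ∧ ∀ k, i < k → k < j → ω k = true

instance (ω : Fin n → Bool) : DecidableRel (AdjacentInTrace ω) := fun _ _ =>
  inferInstanceAs (Decidable (_ ∧ _))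

theorem numRuns_trc (x ω : Fin n → Bool) :
    numRuns (trc x ω) = (if ω = (fun _ => true) then 0 else 1) +
      #{p : Fin n × Fin n | AdjacentInTrace ω p.1 p.2 ∧ x p.1 ≠ x p.2} := by
  set L := (List.finRange n).filter (fun j => ω j = false)
  have hmem (k : Fin n) : k ∈ L ↔ ω k = false := by simp [L]
  have hL : L.Pairwise (· < ·) := (List.pairwise_lt_finRange n).sublist List.filter_sublist
  rw [numRuns, trc, List.length_destutter_ne, ← List.map_tail, List.zip_map, List.countP_map]
  congr 1
  · simp [List.filter_eq_nil_iff, funext_iff]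
  · refine (hL.nodup_zip_tail.card_eq_countP (P := fun p => x p.1 ≠ x p.2)).symm.trans ?_
    congr 1
    ext p
    simp only [mem_filter, List.mem_toFinset, hL.mem_zip_tail_iff, hmem, AdjacentInTrace]
    grind

end Trace

section Channel

variable {ι R : Type*} [Fintype ι] [CommRing R]

def channelWeight (q : R) (ω : ι → Bool) : R := ∏ k, if ω k then q else 1 - q

variable [DecidableEq ι]

theorem sum_channelWeight_mul_ite_forall (q : R) (P : ι → Bool → Prop)
    [∀ k, DecidablePred (P k)] :
    ∑ ω : ι → Bool, channelWeight q ω * (if ∀ k, P k (ω k) then 1 else 0) =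
      ∏ k, ((if P k true then q else 0) + (if P k false then 1 - q else 0)) := by
  calc ∑ ω : ι → Bool, channelWeight q ω * (if ∀ k, P k (ω k) then 1 else 0)
      = ∏ k, ∑ b : Bool, (if b then q else 1 - q) * (if P k b then 1 else 0) := by
        simp_rw [Fintype.prod_sum, prod_mul_distrib, Fintype.prod_boole, channelWeight]
    _ = ∏ k, ((if P k true then q else 0) + (if P k false then 1 - q else 0)) := by
        simp

theorem sum_channelWeight (q : R) : ∑ ω : ι → Bool, channelWeight q ω = 1 := by
  simpa using sum_channelWeight_mul_ite_forall (ι := ι) q (fun _ _ => True)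

theorem sum_channelWeight_mul_ite_eq_allTrue (q : R) :
    ∑ ω : ι → Bool, channelWeight q ω * (if ω = (fun _ => true) then 0 else 1) =
      1 - q ^ Fintype.card ι := by
  have hcompl (ω : ι → Bool) :
      (if ω = (fun _ => true) then (0 : R) else 1) = 1 - if ω = (fun _ => true) then 1 else 0 := by
    split_ifs <;> simp
  simp_rw [hcompl, mul_sub, mul_one, mul_boole, sum_sub_distrib, sum_channelWeight, sum_ite_eq',
    mem_univ, if_true, channelWeight, if_true, prod_const, card_univ]

end Channel

section Expectation

variable {R : Type*} [CommRing R] {n : ℕ}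

theorem pow_wt_mul_pow_sub_wt (q : R) (ω : Fin n → Bool) :
    q ^ wt ω * (1 - q) ^ (n - wt ω) = channelWeight q ω := by
  rw [channelWeight, prod_ite, prod_const, prod_const, wt]
  congr
  have := card_filter_add_card_filter_not (s := (univ : Finset (Fin n))) (fun j => ω j = true)
  rw [card_univ, Fintype.card_fin] at this
  omega

theorem sum_channelWeight_mul_adjacentInTrace (q : R) {i j : Fin n} (hij : i < j) :
    ∑ ω : Fin n → Bool, channelWeight q ω * (if AdjacentInTrace ω i j then 1 else 0) =
      (1 - q) ^ 2 * q ^ ((j : ℕ) - i - 1) := by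
  have hiff (ω : Fin n → Bool) : AdjacentInTrace ω i j ↔
      ∀ k, (k = i ∨ k = j → ω k = false) ∧ (k ∈ Ioo i j → ω k = true) := by
    simp only [AdjacentInTrace, mem_Ioo]
    grind
  convert sum_channelWeight_mul_ite_forall q
    (fun k b => (k = i ∨ k = j → b = false) ∧ (k ∈ Ioo i j → b = true)) using 4
  · exact hiff _
  symm
  calc _ = ∏ k : Fin n, (if k = i then 1 - q else 1) * (if k = j then 1 - q else 1) *
        (if k ∈ Ioo i j then q else 1) := by
        refine prod_congr rfl fun k _ => ?_
        rcases eq_or_ne k i with rfl | hki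
        · simp [hij.ne]
        rcases eq_or_ne k j with rfl | hkj
        · simp [hki]
        by_cases hk : k ∈ Ioo i j <;> simp [hki, hkj, hk]
    _ = (1 - q) ^ 2 * q ^ ((j : ℕ) - i - 1) := by
        simp_rw [prod_mul_distrib, prod_ite_eq', prod_ite_mem, univ_inter, prod_const,
          Fin.card_Ioo, mem_univ, if_true]
        ring

theorem sum_channelWeight_mul_numRuns_trc (q : R) (x : Fin n → Bool) :
    ∑ ω : Fin n → Bool, channelWeight q ω * (numRuns (trc x ω) : R) =
      1 - q ^ n + (1 - q) ^ 2 *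
        ∑ p : Fin n × Fin n with p.1 < p.2 ∧ x p.1 ≠ x p.2, q ^ ((p.2 : ℕ) - p.1 - 1) := by
  have hpair (p : Fin n × Fin n) :
      ∑ ω : Fin n → Bool, channelWeight q ω *
          (if AdjacentInTrace ω p.1 p.2 ∧ x p.1 ≠ x p.2 then 1 else 0) =
        if p.1 < p.2 ∧ x p.1 ≠ x p.2 then (1 - q) ^ 2 * q ^ ((p.2 : ℕ) - p.1 - 1) else 0 := by
    by_cases hx : x p.1 ≠ x p.2
    · by_cases hlt : p.1 < p.2
      · simpa [hx, hlt] using sum_channelWeight_mul_adjacentInTrace q hlt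
      · simp [AdjacentInTrace, hlt]
    · simp [hx]
  simp_rw [numRuns_trc, Nat.cast_add, Nat.cast_ite, Nat.cast_zero, Nat.cast_one,
    natCast_card_filter, mul_add, mul_sum, sum_add_distrib]
  rw [sum_channelWeight_mul_ite_eq_allTrue, Fintype.card_fin, sum_comm, Fintype.sum_congr _ _ hpair, sum_filter]

theorem one_sub_sq_mul_sum_pow_gap (q : R) (n : ℕ) :
    (1 - q) ^ 2 * ∑ p : Fin n × Fin n with p.1 < p.2, q ^ ((p.2 : ℕ) - p.1 - 1) =
      (1 - q) * n - (1 - q ^ n) := by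
  have hinner (j : Fin n) : (1 - q) * ∑ i ∈ Iio j, q ^ ((j : ℕ) - i - 1) = 1 - q ^ (j : ℕ) := by
    rw [← mul_neg_geom_sum, ← sum_range_reflect, ← Nat.Iio_eq_range, ← Fin.map_valEmbedding_Iio,
      sum_map]
    simp [Nat.sub_right_comm]
  calc (1 - q) ^ 2 * ∑ p : Fin n × Fin n with p.1 < p.2, q ^ ((p.2 : ℕ) - p.1 - 1)
      = (1 - q) * ∑ j : Fin n, (1 - q ^ (j : ℕ)) := by
        rw [sum_finset_product_right _ univ Iio (by simp), sq, mul_assoc, mul_sum]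
        simp_rw [hinner]
    _ = (1 - q) * n - (1 - q ^ n) := by
        rw [sum_sub_distrib, Fin.sum_univ_eq_sum_range (q ^ ·), ← mul_neg_geom_sum]
        simp
        ring

end Expectation

theorem expected_total_runs_general (n : ℕ) (x : Fin n → Bool)
    (q : ℝ) (hq0 : 0 < q) :
    (∑ ω : Fin n → Bool,
        q ^ wt ω * (1 - q) ^ (n - wt ω) * (numRuns (trc x ω) : ℝ)) =
      (1 - q) * ((n : ℝ)
        - (1 - q) / q *
            ((∑ i ∈ univ.filter (fun i : Fin n => x i = false),
                ∑ j ∈ univ.filter (fun j : Fin n => x j = false ∧ i < j),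
                  q ^ ((j : ℕ) - (i : ℕ)))
             + ∑ i ∈ univ.filter (fun i : Fin n => x i = true),
                 ∑ j ∈ univ.filter (fun j : Fin n => x j = true ∧ i < j),
                   q ^ ((j : ℕ) - (i : ℕ)))) := by
  have hsame := sum_filter_lt_and_eq x fun i j : Fin n => q ^ ((j : ℕ) - i)
  rw [Fintype.sum_bool, add_comm] at hsame
  have hshift : ∑ p : Fin n × Fin n with p.1 < p.2 ∧ x p.1 = x p.2, q ^ ((p.2 : ℕ) - p.1) =
      q * ∑ p : Fin n × Fin n with p.1 < p.2 ∧ x p.1 = x p.2, q ^ ((p.2 : ℕ) - p.1 - 1) := by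
    rw [mul_sum]
    refine sum_congr rfl fun p hp => ?_
    have hlt : (p.1 : ℕ) < p.2 := (mem_filter.mp hp).2.1
    rw [← pow_succ', Nat.sub_one_add_one (by omega)]
  have hsplit := sum_filter_add_sum_filter_not (univ.filter fun p : Fin n × Fin n => p.1 < p.2)
    (fun p => x p.1 = x p.2) (fun p => q ^ ((p.2 : ℕ) - p.1 - 1))
  simp only [filter_filter] at hsplit
  rw [← hsame, hshift]
  simp_rw [pow_wt_mul_pow_sub_wt, sum_channelWeight_mul_numRuns_trc]
  have hgap := one_sub_sq_mul_sum_pow_gap q n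
  have hq : q ≠ 0 := hq0.ne'
  field_simp
  linear_combination (1 - q) ^ 2 * hsplit + hgap

/-- Expected total number of runs in a trace of `x` through the i.i.d. deletion
channel with deletion probability `q`. -/
theorem expected_total_runs (n : ℕ) (hn : 1 ≤ n) (x : Fin n → Bool)
    (q : ℝ) (hq0 : 0 < q) (hq1 : q < 1) :
    (∑ ω : Fin n → Bool,
        q ^ wt ω * (1 - q) ^ (n - wt ω) * (numRuns (trc x ω) : ℝ)) =
      (1 - q) * ((n : ℝ)
        - (1 - q) / q *
            ((∑ i ∈ univ.filter (fun i : Fin n => x i = false),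
                ∑ j ∈ univ.filter (fun j : Fin n => x j = false ∧ i < j),
                  q ^ ((j : ℕ) - (i : ℕ)))
             + ∑ i ∈ univ.filter (fun i : Fin n => x i = true),
                 ∑ j ∈ univ.filter (fun j : Fin n => x j = true ∧ i < j),
                   q ^ ((j : ℕ) - (i : ℕ)))) :=
  expected_total_runs_general n x q hq0
end

section
/- Let n ≥ 1 and let x ∈ {0,1}^n. For deletion probability q = 1/2, the expected total number of runs in a trace of x satisfies E[R_x] = (1/2)·(n − α_x), where α_x = Σ_{i,j ∈ S̄_x, i<j} (1/2)^{j−i} + Σ_{i,j ∈ S_x, i<j} (1/2)^{j−i}. -/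
open Finset

/-- The coefficient `α_x`. -/
noncomputable def alphaC {n : ℕ} (x : Fin n → Bool) : ℝ :=
  (∑ i ∈ univ.filter (fun i : Fin n => x i = false),
     ∑ j ∈ univ.filter (fun j : Fin n => x j = false ∧ i < j),
       ((1:ℝ)/2) ^ ((j : ℕ) - (i : ℕ)))
  + ∑ i ∈ univ.filter (fun i : Fin n => x i = true),
      ∑ j ∈ univ.filter (fun j : Fin n => x j = true ∧ i < j),
        ((1:ℝ)/2) ^ ((j : ℕ) - (i : ℕ))

/-- The coefficient `β_x`. -/
noncomputable def betaC {n : ℕ} (x : Fin n → Bool) : ℝ :=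
  (∑ i ∈ univ.filter (fun i : Fin n => x i = false),
     ∑ j ∈ univ.filter (fun j : Fin n => x j = false ∧ i < j),
       ((1:ℝ)/2) ^ (n - ((j : ℕ) - (i : ℕ))))
  + ∑ i ∈ univ.filter (fun i : Fin n => x i = true),
      ∑ j ∈ univ.filter (fun j : Fin n => x j = true ∧ i < j),
        ((1:ℝ)/2) ^ (n - ((j : ℕ) - (i : ℕ)))

/-- The coefficient `γ_x`. -/
noncomputable def gammaC {n : ℕ} (x : Fin n → Bool) : ℝ :=
  (∑ i ∈ univ.filter (fun i : Fin n => x i = false),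
     ∑ j ∈ univ.filter (fun j : Fin n => x j = true ∧ i < j),
       ((1:ℝ)/2) ^ (n - ((j : ℕ) - (i : ℕ))))
  + ∑ i ∈ univ.filter (fun i : Fin n => x i = true),
      ∑ j ∈ univ.filter (fun j : Fin n => x j = false ∧ i < j),
        ((1:ℝ)/2) ^ (n - ((j : ℕ) - (i : ℕ)))

/-- The coefficient `δ_x`. -/
noncomputable def deltaC {n : ℕ} (x : Fin n → Bool) : ℝ :=
  (∑ i ∈ univ.filter (fun i : Fin n => x i = false),
     ∑ j ∈ univ.filter (fun j : Fin n => x j = true ∧ i < j),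
       ((1:ℝ)/2) ^ ((j : ℕ) - (i : ℕ)))
  + ∑ i ∈ univ.filter (fun i : Fin n => x i = true),
      ∑ j ∈ univ.filter (fun j : Fin n => x j = false ∧ i < j),
        ((1:ℝ)/2) ^ ((j : ℕ) - (i : ℕ))

/-!
With `q = 1/2` every deletion pattern has probability `2⁻ⁿ`, so the expectation is the uniform
average over patterns. Condition on the first bit `a` of `x = a :: y`: if it is deleted, the trace
is a trace of `y`; if it survives, the trace is `a` prepended to a trace of `y`, which adds one
run unless that trace starts with `a`. The trace of `y` starts at position `j` of `y` (counted
from 1) with probability `2⁻ʲ`, so `E[R_{a :: y}] = E[R_y] + (1 - ∑_{y_j = a} 2⁻ʲ) / 2`, and the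
pairs `(1, j + 1)` added to `α` are exactly those in that sum.
-/

open scoped BigOperators

lemma Fintype.expect_fin_succ_pi {α M : Type*} [Fintype α] [AddCommMonoid M] [Module ℚ≥0 M]
    {n : ℕ} (f : (Fin (n + 1) → α) → M) :
    𝔼 ω, f ω = 𝔼 a, 𝔼 ω : Fin n → α, f (Fin.cons a ω) := by
  rw [← Finset.expect_product' univ univ, ← Fintype.expect_equiv (Fin.consEquiv fun _ => α)]
  · rfl
  · exact fun _ => rfl

lemma Fintype.expect_bool {K : Type*} [Semifield K] [CharZero K] (f : Bool → K) :
    𝔼 b, f b = (f false + f true) / 2 := by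
  rw [Fintype.expect_eq_sum_div_card, Fintype.sum_bool, add_comm]
  simp

lemma Fintype.expect_fin_pi_bool {K : Type*} [Semifield K] [CharZero K] {n : ℕ}
    (f : (Fin n → Bool) → K) :
    𝔼 ω, f ω = (1 / 2) ^ n * ∑ ω, f ω := by
  simp [Fintype.expect_eq_sum_div_card, div_eq_inv_mul]

lemma numRuns_cons (a : Bool) (l : List Bool) :
    numRuns (a :: l) = numRuns l + if l.head? = some a then 0 else 1 := by
  cases l with
  | nil => simp [numRuns]
  | cons b t =>
    rcases eq_or_ne b a with rfl | h
    · simp [numRuns, List.destutter, List.destutter']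
    · simp [numRuns, List.destutter, List.destutter', h, Ne.symm h]

section DeletionChannel

variable {n : ℕ}

lemma deletion_prob_half (ω : Fin n → Bool) :
    ((1 : ℝ) / 2) ^ wt ω * (1 - (1 : ℝ) / 2) ^ (n - wt ω) = (1 / 2) ^ n := by
  have hwt : wt ω ≤ n := (card_filter_le _ _).trans_eq (card_fin n)
  rw [show (1 : ℝ) - 1 / 2 = 1 / 2 by norm_num, ← pow_add, Nat.add_sub_cancel' hwt]

@[simp]
lemma trc_cons_true (a : Bool) (x ω : Fin n → Bool) :
    trc (Fin.cons a x) (Fin.cons true ω) = trc x ω := by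
  simp [trc, List.finRange_succ, List.filter_map, Function.comp_def]

@[simp]
lemma trc_cons_false (a : Bool) (x ω : Fin n → Bool) :
    trc (Fin.cons a x) (Fin.cons false ω) = a :: trc x ω := by
  simp [trc, List.finRange_succ, List.filter_map, Function.comp_def]

lemma expect_head_trc_eq_some (y : Fin n → Bool) (a : Bool) :
    𝔼 ω, (if (trc y ω).head? = some a then 1 else 0 : ℝ) =
      ∑ i, if y i = a then (1 / 2 : ℝ) ^ ((i : ℕ) + 1) else 0 := by
  induction n with
  | zero => simp [trc]
  | succ n ih =>
    rw [← Fin.cons_self_tail y, Fintype.expect_fin_succ_pi, Fintype.expect_bool]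
    simp only [trc_cons_false, trc_cons_true, List.head?_cons, Option.some_inj, ih,
      Fintype.expect_const, Fin.sum_univ_succ, Fin.cons_zero, Fin.cons_succ]
    simp only [Fin.val_zero, Fin.val_succ]
    rw [add_div, Finset.sum_div]
    congr 1
    · split_ifs <;> norm_num
    · exact Finset.sum_congr rfl fun i _ => by split_ifs <;> ring

noncomputable def pairWeight (x : Fin n → Bool) : ℝ :=
  ∑ i, ∑ j, if x i = x j ∧ i < j then (1 / 2 : ℝ) ^ ((j : ℕ) - i) else 0

lemma alphaC_eq_pairWeight (x : Fin n → Bool) : alphaC x = pairWeight x := by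
  rw [alphaC, pairWeight]
  simp only [Finset.sum_filter]
  rw [← Finset.sum_add_distrib]
  refine Finset.sum_congr rfl fun i _ => ?_
  cases x i <;> simp only [Bool.false_eq_true, Bool.true_eq_false, reduceIte, add_zero,
    zero_add] <;> exact Finset.sum_congr rfl fun j _ => by cases x j <;> simp

lemma pairWeight_cons (a : Bool) (y : Fin n → Bool) :
    pairWeight (Fin.cons a y : Fin (n + 1) → Bool) =
      pairWeight y + ∑ j, if y j = a then (1 / 2 : ℝ) ^ ((j : ℕ) + 1) else 0 := by
  rw [pairWeight, pairWeight, Fin.sum_univ_succ, add_comm]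
  congr 1
  · refine Finset.sum_congr rfl fun i _ => ?_
    rw [Fin.sum_univ_succ]
    simp [Fin.succ_lt_succ_iff]
  · rw [Fin.sum_univ_succ]
    simp [Fin.succ_pos, eq_comm]

lemma expect_numRuns_trc (x : Fin n → Bool) :
    𝔼 ω, (numRuns (trc x ω) : ℝ) = (n - pairWeight x) / 2 := by
  induction n with
  | zero => simp [trc, numRuns, pairWeight]
  | succ n ih =>
    have hcons (l : List Bool) : (numRuns (x 0 :: l) : ℝ) =
        numRuns l + 1 - if l.head? = some (x 0) then 1 else 0 := by
      rw [numRuns_cons]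
      split_ifs <;> simp
    rw [← Fin.cons_self_tail x, Fintype.expect_fin_succ_pi, Fintype.expect_bool]
    simp only [trc_cons_false, trc_cons_true, hcons]
    rw [Finset.expect_sub_distrib, Finset.expect_add_distrib, Fintype.expect_const,
      expect_head_trc_eq_some, ih, pairWeight_cons]
    push_cast
    ring

end DeletionChannel

theorem expected_total_runs_half_general (n : ℕ) (x : Fin n → Bool) :
    (∑ ω : Fin n → Bool,
        ((1:ℝ)/2) ^ wt ω * (1 - (1:ℝ)/2) ^ (n - wt ω) * (numRuns (trc x ω) : ℝ)) =
      (1/2) * ((n : ℝ) - alphaC x) := by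
  simp only [deletion_prob_half, ← Finset.mul_sum, ← Fintype.expect_fin_pi_bool,
    expect_numRuns_trc, alphaC_eq_pairWeight]
  ring

/-- For deletion probability `q = 1/2`, the expected total number of runs in a
trace of `x` equals `(1/2) * (n - α_x)`. -/
theorem expected_total_runs_half (n : ℕ) (hn : 1 ≤ n) (x : Fin n → Bool) :
    (∑ ω : Fin n → Bool,
        ((1:ℝ)/2) ^ wt ω * (1 - (1:ℝ)/2) ^ (n - wt ω) * (numRuns (trc x ω) : ℝ)) =
      (1/2) * ((n : ℝ) - alphaC x) :=
  expected_total_runs_half_general n x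
end

section
/- Let m ≥ 2, n = 2^m, let x ∈ RM(m,1), and let ℓ ≥ 1. Consider ℓ independent traces of x through the i.i.d. deletion channel with deletion probability q = 1/2, i.e., the uniform distribution over ℓ-tuples of deletion patterns (ω¹, …, ω^ℓ) ∈ ({0,1}^n)^ℓ. Let A be the number of indices i ∈ [ℓ] for which the trace T_x(ω^i) is nonempty and its first bit equals the first bit x_1 of x. Then Pr(A ≤ ℓ/2) ≤ e^{−ℓ/288}. -/
open Finset

/-- The first-order Reed-Muller code `RM(m,1)`: evaluation vectors of affine
Boolean polynomials `u₀ + u₁x₁ + ⋯ + u_mx_m`, coordinates indexed by the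
`2^m` evaluation points in lexicographic order. -/
def RM1 (m : ℕ) : Set (Fin (2 ^ m) → Bool) :=
  { x | ∃ (u0 : Bool) (u : Fin m → Bool), ∀ t : Fin (2 ^ m),
      x t = (u0 ^^ decide ((univ.filter fun i : Fin m =>
        u i = true ∧ (t : ℕ).testBit (i : ℕ) = true).card % 2 = 1)) }

section helpers

lemma head?_filter_append {α : Type*} (p : α → Bool) (l₁ l₂ : List α) (a : α)
    (h : ∀ b ∈ l₁, p b = false) (ha : p a = true) :
    ((l₁ ++ a :: l₂).filter p).head? = some a := by
  rw [List.filter_append, List.filter_eq_nil_iff.2 (by simpa using h)]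
  simp [List.filter_cons, ha]

lemma finRange_decomp (n : ℕ) (j : Fin n) :
    List.finRange n = (List.finRange n).take j ++ j :: (List.finRange n).drop (j + 1) := by
  have h : (j : ℕ) < (List.finRange n).length := by simp [j.2]
  have hget : (List.finRange n)[(j : ℕ)] = j := by
    simp [List.getElem_finRange, Fin.ext_iff]
  conv_lhs => rw [← List.take_append_drop (j : ℕ) (List.finRange n),
    List.drop_eq_getElem_cons h]
  rw [hget]

lemma mem_take_finRange {n : ℕ} (j : Fin n) (b : Fin n)
    (hb : b ∈ (List.finRange n).take j) : b < j := by
  obtain ⟨i, hi, hbi⟩ := List.mem_take_iff_getElem.1 hb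
  simp only [List.getElem_take', List.getElem_finRange, Fin.ext_iff, Fin.coe_cast] at hbi
  simp only [List.length_finRange] at hi
  rw [Fin.lt_def]
  omega

lemma trc_head {n : ℕ} (x ω : Fin n → Bool) (j : Fin n) (hj : ω j = false)
    (hlt : ∀ i : Fin n, i < j → ω i = true) :
    (trc x ω).head? = some (x j) := by
  unfold trc
  rw [List.head?_map, finRange_decomp n j,
    head?_filter_append _ _ _ _ (fun b hb => by simp [hlt b (mem_take_finRange j b hb)])
      (by simp [hj])]
  rfl

lemma card_cube_filter (n : ℕ) (s : Finset (Fin n)) (v : Fin n → Bool) :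
    (univ.filter fun ω : Fin n → Bool => ∀ i ∈ s, ω i = v i).card = 2 ^ (n - s.card) := by
  classical
  rw [← Fintype.card_subtype]
  have e : {ω : Fin n → Bool // ∀ i ∈ s, ω i = v i} ≃ ({i : Fin n // i ∉ s} → Bool) :=
    { toFun := fun ω i => ω.1 i
      invFun := fun f => ⟨fun i => if h : i ∈ s then v i else f ⟨i, h⟩, fun i hi => by simp [hi]⟩
      left_inv := fun ω => by
        ext i
        by_cases h : i ∈ s <;> simp [h, ω.2 i]
      right_inv := fun f => by
        ext i
        simp [i.2] }
  rw [Fintype.card_congr e, Fintype.card_fun, Fintype.card_subtype_compl,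
    Fintype.card_coe, Fintype.card_fin, Fintype.card_bool]

lemma four_le (m : ℕ) (hm : 2 ≤ m) : 4 ≤ 2 ^ m :=
  le_trans (by norm_num) (Nat.pow_le_pow_right (by norm_num) hm)

lemma exists_good (m : ℕ) (hm : 2 ≤ m) (x : Fin (2 ^ m) → Bool) (hx : x ∈ RM1 m)
    (h0n : 0 < 2 ^ m) :
    ∃ j : Fin (2 ^ m), 0 < (j : ℕ) ∧ (j : ℕ) ≤ 3 ∧ x j = x ⟨0, h0n⟩ := by
  obtain ⟨u0, u, hu⟩ := hx
  have hn := four_le m hm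
  have h0m : 0 < m := by omega
  have h1m : 1 < m := by omega
  have hx0 : x ⟨0, h0n⟩ = u0 := by
    rw [hu]
    have : (univ.filter fun i : Fin m =>
        u i = true ∧ (((⟨0, h0n⟩ : Fin (2 ^ m)) : ℕ)).testBit (i : ℕ) = true) = ∅ := by
      apply Finset.filter_eq_empty_iff.2
      intro i _
      simp [Nat.zero_testBit]
    rw [this]
    simp
  by_cases h0 : u ⟨0, h0m⟩ = true
  · by_cases h1 : u ⟨1, h1m⟩ = true
    · refine ⟨⟨3, by omega⟩, by norm_num, by norm_num, ?_⟩
      rw [hu, hx0]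
      have : (univ.filter fun i : Fin m =>
          u i = true ∧ ((3 : ℕ)).testBit (i : ℕ) = true) = {⟨0, h0m⟩, ⟨1, h1m⟩} := by
        ext i
        simp only [mem_filter, mem_univ, true_and, mem_insert, mem_singleton]
        have h3 : (3 : ℕ).testBit (i : ℕ) = decide ((i : ℕ) < 2) := by
          simpa using (Nat.testBit_two_pow_sub_one 2 i)
        rw [h3]
        constructor
        · rintro ⟨hui, hlt⟩
          have : (i : ℕ) < 2 := by simpa using hlt
          interval_cases h : (i : ℕ)
          · left; exact Fin.ext (by simp [h])
          · right; exact Fin.ext (by simp [h])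
        · rintro (rfl | rfl) <;> simp [h0, h1]
      rw [this]
      norm_num [Finset.card_insert_of_notMem, Fin.ext_iff]
    · refine ⟨⟨2, by omega⟩, by norm_num, by norm_num, ?_⟩
      rw [hu, hx0]
      have : (univ.filter fun i : Fin m =>
          u i = true ∧ ((2 : ℕ)).testBit (i : ℕ) = true) = ∅ := by
        apply Finset.filter_eq_empty_iff.2
        intro i _
        have h2 : (2 : ℕ).testBit (i : ℕ) = decide (1 = (i : ℕ)) := by
          simpa using (Nat.testBit_two_pow (n := 1) (m := (i : ℕ)))
        rw [h2]
        intro hc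
        have hi : i = ⟨1, h1m⟩ := Fin.ext (by have := hc.2; simp at this ⊢; omega)
        exact h1 (hi ▸ hc.1)
      rw [this]
      simp
  · refine ⟨⟨1, by omega⟩, by norm_num, by norm_num, ?_⟩
    rw [hu, hx0]
    have : (univ.filter fun i : Fin m =>
        u i = true ∧ ((1 : ℕ)).testBit (i : ℕ) = true) = ∅ := by
      apply Finset.filter_eq_empty_iff.2
      intro i _
      have h1' : (1 : ℕ).testBit (i : ℕ) = decide (0 = (i : ℕ)) := by
        simpa using (Nat.testBit_two_pow (n := 0) (m := (i : ℕ)))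
      rw [h1']
      intro hc
      have hi : i = ⟨0, h0m⟩ := Fin.ext (by have := hc.2; simp at this ⊢; omega)
      exact h0 (hi ▸ hc.1)
    rw [this]
    simp

end helpers

open scoped Classical in
theorem RM1_aux (m : ℕ) (hm : 2 ≤ m) (x : Fin (2 ^ m) → Bool)
    (hx : x ∈ RM1 m) (ℓ : ℕ) (hℓ : 1 ≤ ℓ) (h0n : 0 < 2 ^ m) :
    ((univ.filter fun ωs : Fin ℓ → Fin (2 ^ m) → Bool =>
        ((univ.filter fun i : Fin ℓ =>
            (trc x (ωs i)).head? = some (x ⟨0, h0n⟩)).card : ℝ) ≤ (ℓ : ℝ) / 2).card : ℝ)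
      / (2 ^ (2 ^ m) : ℝ) ^ ℓ ≤ Real.exp (-(ℓ : ℝ) / 288) := by
  have hn : 4 ≤ 2 ^ m := four_le m hm
  obtain ⟨j, hj0, hj3, hjx⟩ := exists_good m hm x hx h0n
  set P : (Fin (2 ^ m) → Bool) → Prop :=
    fun ω => (trc x ω).head? = some (x ⟨0, h0n⟩) with hP
  -- cardinality of the success set
  have hN : 9 * 2 ^ (2 ^ m) ≤ 16 * (univ.filter P).card := by
    have hA := card_cube_filter (2 ^ m) {(⟨0, h0n⟩ : Fin (2 ^ m))} (fun _ => false)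
    have hB := card_cube_filter (2 ^ m) (Finset.Iic j) (fun i => decide (i < j))
    rw [Finset.card_singleton] at hA
    rw [Fin.card_Iic] at hB
    set A := univ.filter fun ω : Fin (2 ^ m) → Bool =>
      ∀ i ∈ ({(⟨0, h0n⟩ : Fin (2 ^ m))} : Finset (Fin (2 ^ m))), ω i = (fun _ => false) i with hAdef
    set B := univ.filter fun ω : Fin (2 ^ m) → Bool =>
      ∀ i ∈ Finset.Iic j, ω i = (fun i => decide (i < j)) i with hBdef
    have hAsub : A ⊆ univ.filter P := by
      intro ω hω
      rw [hAdef, Finset.mem_filter] at hω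
      rw [Finset.mem_filter]
      refine ⟨Finset.mem_univ _, ?_⟩
      exact trc_head x ω ⟨0, h0n⟩ (hω.2 _ (Finset.mem_singleton_self _))
        (fun i hi => absurd hi (by simp [Fin.lt_def]))
    have hBsub : B ⊆ univ.filter P := by
      intro ω hω
      rw [hBdef, Finset.mem_filter] at hω
      rw [Finset.mem_filter]
      refine ⟨Finset.mem_univ _, ?_⟩
      have hj' : ω j = false := by simpa using hω.2 j (Finset.mem_Iic.2 le_rfl)
      have hlt : ∀ i : Fin (2 ^ m), i < j → ω i = true := by
        intro i hi
        simpa [hi] using hω.2 i (Finset.mem_Iic.2 hi.le)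
      show (trc x ω).head? = some (x ⟨0, h0n⟩)
      rw [trc_head x ω j hj' hlt, hjx]
    have hdisj : Disjoint A B := by
      rw [Finset.disjoint_left]
      intro ω hωA hωB
      rw [hAdef, Finset.mem_filter] at hωA
      rw [hBdef, Finset.mem_filter] at hωB
      have h1 : ω ⟨0, h0n⟩ = false := hωA.2 _ (Finset.mem_singleton_self _)
      have h2 : ω ⟨0, h0n⟩ = true := by
        have := hωB.2 ⟨0, h0n⟩ (Finset.mem_Iic.2 (by simp [Fin.le_def]))
        simpa [Fin.lt_def, hj0] using this
      rw [h1] at h2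
      exact Bool.false_ne_true h2
    have hcard : 2 ^ (2 ^ m - 1) + 2 ^ (2 ^ m - ((j : ℕ) + 1)) ≤ (univ.filter P).card := by
      rw [← hA, ← hB, ← Finset.card_union_of_disjoint hdisj]
      exact Finset.card_le_card (Finset.union_subset hAsub hBsub)
    have e1 : 2 ^ (2 ^ m) = 2 ^ (2 ^ m - 1) * 2 := by
      rw [← pow_succ]; congr 1; omega
    have e2 : 2 ^ (2 ^ m) = 2 ^ (2 ^ m - 4) * 16 := by
      rw [show (16 : ℕ) = 2 ^ 4 by norm_num, ← pow_add]; congr 1; omega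
    have e3 : 2 ^ (2 ^ m - 4) ≤ 2 ^ (2 ^ m - ((j : ℕ) + 1)) :=
      Nat.pow_le_pow_right (by norm_num) (by omega)
    linarith
  -- the weight function
  set g : (Fin (2 ^ m) → Bool) → ℝ := fun ω => if P ω then (7/9 : ℝ) else 1 with hg
  have hg_nonneg : ∀ ω, 0 ≤ g ω := by
    intro ω; rw [hg]; dsimp only; split <;> norm_num
  have hg_sum : ∑ ω : Fin (2 ^ m) → Bool, g ω ≤ 7/8 * 2 ^ (2 ^ m) := by
    have heq : ∀ ω : Fin (2 ^ m) → Bool, g ω = 1 - (if P ω then (2/9 : ℝ) else 0) := by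
      intro ω; rw [hg]; dsimp only; split <;> norm_num
    rw [Finset.sum_congr rfl (fun ω _ => heq ω), Finset.sum_sub_distrib,
      Finset.sum_const, ← Finset.sum_filter, Finset.sum_const]
    have hcu : (univ : Finset (Fin (2 ^ m) → Bool)).card = 2 ^ (2 ^ m) := by
      simp [Fintype.card_fun]
    rw [hcu]
    have hNR : (9 : ℝ) * 2 ^ (2 ^ m) ≤ 16 * ((univ.filter P).card : ℝ) := by
      exact_mod_cast hN
    simp only [nsmul_eq_mul, smul_eq_mul, mul_one]
    push_cast
    linarith
  -- Chernoff counting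
  set Bad := univ.filter fun ωs : Fin ℓ → Fin (2 ^ m) → Bool =>
    ((univ.filter fun i : Fin ℓ => P (ωs i)).card : ℝ) ≤ (ℓ : ℝ) / 2 with hBad
  have key : (Bad.card : ℝ) * (7/9 : ℝ) ^ ((ℓ : ℝ)/2) ≤ (7/8 * 2 ^ (2 ^ m)) ^ ℓ := by
    have step1 : (Bad.card : ℝ) * (7/9 : ℝ) ^ ((ℓ : ℝ)/2)
        ≤ ∑ ωs ∈ Bad, ∏ i : Fin ℓ, g (ωs i) := by
      have hconst : (Bad.card : ℝ) * (7/9 : ℝ) ^ ((ℓ : ℝ)/2)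
          = ∑ _ωs ∈ Bad, (7/9 : ℝ) ^ ((ℓ : ℝ)/2) := by
        rw [Finset.sum_const, nsmul_eq_mul]
      rw [hconst]
      refine Finset.sum_le_sum ?_
      · intro ωs hωs
        rw [hBad, Finset.mem_filter] at hωs
        have hc := hωs.2
        have hprod : ∏ i : Fin ℓ, g (ωs i)
            = (7/9 : ℝ) ^ (univ.filter fun i : Fin ℓ => P (ωs i)).card := by
          rw [hg]
          rw [Finset.prod_ite, Finset.prod_const, Finset.prod_const, one_pow, mul_one]
        rw [hprod, ← Real.rpow_natCast (7/9 : ℝ)]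
        exact Real.rpow_le_rpow_of_exponent_ge (by norm_num) (by norm_num) hc
    have step2 : ∑ ωs ∈ Bad, ∏ i : Fin ℓ, g (ωs i)
        ≤ ∑ ωs : Fin ℓ → Fin (2 ^ m) → Bool, ∏ i : Fin ℓ, g (ωs i) :=
      Finset.sum_le_sum_of_subset_of_nonneg (Finset.filter_subset _ _)
        (fun ωs _ _ => Finset.prod_nonneg fun i _ => hg_nonneg _)
    have step3 : ∑ ωs : Fin ℓ → Fin (2 ^ m) → Bool, ∏ i : Fin ℓ, g (ωs i)
        = (∑ ω : Fin (2 ^ m) → Bool, g ω) ^ ℓ := by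
      rw [Finset.sum_pow' univ g ℓ, Fintype.piFinset_univ]
    have step4 : (∑ ω : Fin (2 ^ m) → Bool, g ω) ^ ℓ ≤ (7/8 * 2 ^ (2 ^ m)) ^ ℓ :=
      pow_le_pow_left₀ (Finset.sum_nonneg fun ω _ => hg_nonneg ω) hg_sum ℓ
    calc (Bad.card : ℝ) * (7/9 : ℝ) ^ ((ℓ : ℝ)/2) ≤ _ := step1
      _ ≤ _ := step2
      _ = _ := step3
      _ ≤ _ := step4
  -- final arithmetic
  have h79 : (0 : ℝ) < (7/9 : ℝ) ^ ((ℓ : ℝ)/2) := Real.rpow_pos_of_pos (by norm_num) _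
  have hMpos : (0 : ℝ) < ((2 : ℝ) ^ (2 ^ m)) ^ ℓ := by positivity
  rw [div_le_iff₀ hMpos]
  have hfinal : (7/8 : ℝ) ^ ℓ * (9/7 : ℝ) ^ ((ℓ : ℝ)/2) ≤ Real.exp (-(ℓ : ℝ)/288) := by
    have h1 : (7/8 : ℝ) ^ ℓ = ((49/64 : ℝ)) ^ ((ℓ : ℝ)/2) := by
      rw [← Real.rpow_natCast (7/8) ℓ]
      rw [show ((ℓ : ℝ)) = 2 * ((ℓ : ℝ)/2) by ring, Real.rpow_mul (by norm_num)]
      norm_num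
    rw [h1, ← Real.mul_rpow (by norm_num) (by norm_num)]
    rw [show (49/64 : ℝ) * (9/7) = 63/64 by norm_num]
    have h3 : (63/64 : ℝ) ≤ Real.exp (-(1/144)) := by
      have := Real.add_one_le_exp (-(1/144 : ℝ))
      nlinarith [this]
    calc (63/64 : ℝ) ^ ((ℓ : ℝ)/2) ≤ (Real.exp (-(1/144))) ^ ((ℓ : ℝ)/2) :=
          Real.rpow_le_rpow (by norm_num) h3 (by positivity)
      _ = Real.exp (-(ℓ : ℝ)/288) := by rw [← Real.exp_mul]; ring_nf
  have hinv : ((7/9 : ℝ) ^ ((ℓ : ℝ)/2))⁻¹ = (9/7 : ℝ) ^ ((ℓ : ℝ)/2) := by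
    rw [← Real.inv_rpow (by norm_num)]; norm_num
  calc (Bad.card : ℝ) ≤ (7/8 * 2 ^ (2 ^ m)) ^ ℓ * ((7/9 : ℝ) ^ ((ℓ : ℝ)/2))⁻¹ := by
        rw [← le_div_iff₀ h79] at key
        rwa [div_eq_mul_inv] at key
    _ = (7/8 : ℝ) ^ ℓ * (9/7 : ℝ) ^ ((ℓ : ℝ)/2) * ((2 : ℝ) ^ (2 ^ m)) ^ ℓ := by
        rw [hinv, mul_pow]; ring
    _ ≤ Real.exp (-(ℓ : ℝ)/288) * ((2 : ℝ) ^ (2 ^ m)) ^ ℓ :=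
        mul_le_mul_of_nonneg_right hfinal (le_of_lt hMpos)


open scoped Classical in
/-- For `x ∈ RM(m,1)` and `ℓ` independent traces with `q = 1/2`, the probability
that at most half the traces are nonempty with first bit equal to the first bit
of `x` is at most `e^{-ℓ/288}`. -/
theorem RM1_first_bit_majority (m : ℕ) (hm : 2 ≤ m) (x : Fin (2 ^ m) → Bool)
    (hx : x ∈ RM1 m) (ℓ : ℕ) (hℓ : 1 ≤ ℓ) :
    ((univ.filter fun ωs : Fin ℓ → Fin (2 ^ m) → Bool =>
        ((univ.filter fun i : Fin ℓ =>
            (trc x (ωs i)).head? = some (x ⟨0, by positivity⟩)).card : ℝ) ≤ (ℓ : ℝ) / 2).card : ℝ)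
      / (2 ^ (2 ^ m) : ℝ) ^ ℓ ≤ Real.exp (-(ℓ : ℝ) / 288) := by
  exact RM1_aux m hm x hx ℓ hℓ (by positivity)
end
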